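/- arXiv:2510.25638 — 6 statements merged into one kernel-verified Lean document; each statement's English description precedes it below -/
import Mathlib

section
/- Let p(z) = -2z^5 + 3z^3 + 40z^2 - 48. Then p has exactly one real root in the interval (2, √2(√3+1)), and this root lies in the interval (2.75, 2.76). -/
lemma hβu' : Real.sqrt 2 * (Real.sqrt 3 + 1) < 3.864 := by
  have h2 : Real.sqrt 2 < 1.41422 := by
    rw [show (1.41422:ℝ) = Real.sqrt (1.41422^2) by rw [Real.sqrt_sq]; norm_num]
    apply Real.sqrt_lt_sqrt <;> norm_num
  have h3 : Real.sqrt 3 < 1.73206 := by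
    rw [show (1.73206:ℝ) = Real.sqrt (1.73206^2) by rw [Real.sqrt_sq]; norm_num]
    apply Real.sqrt_lt_sqrt <;> norm_num
  have h2' : (0:ℝ) ≤ Real.sqrt 2 := Real.sqrt_nonneg _
  nlinarith

lemma hβl' : (2.76:ℝ) < Real.sqrt 2 * (Real.sqrt 3 + 1) := by
  have h2 : (1.414:ℝ) < Real.sqrt 2 := by
    rw [show (1.414:ℝ) = Real.sqrt (1.414^2) by rw [Real.sqrt_sq]; norm_num]
    apply Real.sqrt_lt_sqrt <;> norm_num
  have h3 : (1.732:ℝ) < Real.sqrt 3 := by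
    rw [show (1.732:ℝ) = Real.sqrt (1.732^2) by rw [Real.sqrt_sq]; norm_num]
    apply Real.sqrt_lt_sqrt <;> norm_num
  nlinarith

lemma L1 (z : ℝ) (h1 : 2 < z) (h2 : z ≤ 2.75) : 0 < -2*z^5 + 3*z^3 + 40*z^2 - 48 := by
  have ht : (0:ℝ) ≤ z - 2 := by linarith
  have hs : (0:ℝ) ≤ 2.75 - z := by linarith
  nlinarith [mul_nonneg hs ht, mul_nonneg hs (pow_nonneg ht 2),
    mul_nonneg hs (pow_nonneg ht 3), mul_nonneg hs (pow_nonneg ht 4),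
    pow_nonneg ht 2, pow_nonneg ht 3, pow_nonneg ht 4, pow_nonneg ht 5]

lemma L2 (z : ℝ) (h1 : 2.76 ≤ z) (h2 : z < 3.864) : -2*z^5 + 3*z^3 + 40*z^2 - 48 < 0 := by
  have ht : (0:ℝ) ≤ z - 2.76 := by linarith
  nlinarith [pow_nonneg ht 2, pow_nonneg ht 3, pow_nonneg ht 4, pow_nonneg ht 5, ht]

lemma mono (y z : ℝ) (h1 : 2.75 < y) (hlt : y < z) (h4 : z < 2.76) :
    -2*z^5 + 3*z^3 + 40*z^2 - 48 < -2*y^5 + 3*y^3 + 40*y^2 - 48 := by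
  have hy2 : (2.75:ℝ) < z := lt_trans h1 hlt
  have hyp : (0:ℝ) < y := by linarith
  have hzp : (0:ℝ) < z := by linarith
  have h2 : y < 2.76 := lt_trans hlt h4
  have ha : (7.5625:ℝ) < y^2 := by nlinarith
  have hb : (7.5625:ℝ) < z^2 := by nlinarith
  have hc : (7.5625:ℝ) < y*z := by nlinarith
  have ha' : y^2 < 7.6176 := by nlinarith
  have hb' : z^2 < 7.6176 := by nlinarith
  have hc' : y*z < 7.6176 := by nlinarith
  have hQ : 0 < 2*(y^4 + y^3*z + y^2*z^2 + y*z^3 + z^4) - 3*(y^2 + y*z + z^2) - 40*(y+z) := by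
    nlinarith [mul_pos (sub_pos.2 ha) (sub_pos.2 ha), mul_pos (sub_pos.2 hb) (sub_pos.2 hb),
      mul_pos (sub_pos.2 ha) (sub_pos.2 hc), mul_pos (sub_pos.2 hb) (sub_pos.2 hc),
      mul_pos (sub_pos.2 ha) (sub_pos.2 hb)]
  nlinarith [mul_pos (sub_pos.2 hlt) hQ]

theorem stmt0 :
    (∃! z : ℝ, z ∈ Set.Ioo 2 (Real.sqrt 2 * (Real.sqrt 3 + 1)) ∧
      -2*z^5 + 3*z^3 + 40*z^2 - 48 = 0) ∧
    (∀ z : ℝ, z ∈ Set.Ioo 2 (Real.sqrt 2 * (Real.sqrt 3 + 1)) →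
      -2*z^5 + 3*z^3 + 40*z^2 - 48 = 0 → z ∈ Set.Ioo (2.75 : ℝ) 2.76) := by
  have hβu := hβu'
  have hβl := hβl'
  have key : ∀ z : ℝ, z ∈ Set.Ioo 2 (Real.sqrt 2 * (Real.sqrt 3 + 1)) →
      -2*z^5 + 3*z^3 + 40*z^2 - 48 = 0 → z ∈ Set.Ioo (2.75 : ℝ) 2.76 := by
    intro z ⟨hz1, hz2⟩ hz0
    have hz2' : z < 3.864 := lt_trans hz2 hβu
    constructor
    · by_contra h; push_neg at h
      exact absurd hz0 (ne_of_gt (L1 z hz1 h))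
    · by_contra h; push_neg at h
      exact absurd hz0 (ne_of_lt (L2 z h hz2'))
  have hc : ContinuousOn (fun z : ℝ => -2*z^5 + 3*z^3 + 40*z^2 - 48)
      (Set.Icc (2.75:ℝ) 2.76) := by fun_prop
  have hiv := intermediate_value_Ioo' (by norm_num : (2.75:ℝ) ≤ 2.76) hc
  have h0 : (0:ℝ) ∈ Set.Ioo ((fun z : ℝ => -2*z^5 + 3*z^3 + 40*z^2 - 48) 2.76)
      ((fun z : ℝ => -2*z^5 + 3*z^3 + 40*z^2 - 48) 2.75) := by
    constructor <;> norm_num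
  obtain ⟨z, hz, hfz⟩ := hiv h0
  simp only at hfz
  refine ⟨⟨z, ⟨⟨lt_trans (by norm_num) hz.1, lt_trans hz.2 hβl⟩, hfz⟩, ?_⟩, key⟩
  rintro y ⟨hy, hy0⟩
  have hyI := key y hy hy0
  by_contra hne
  rcases lt_or_gt_of_ne hne with hlt | hlt
  · have := mono y z hyI.1 hlt hz.2
    rw [hy0, hfz] at this; exact lt_irrefl 0 this
  · have := mono z y hz.1 hlt hyI.2
    rw [hy0, hfz] at this; exact lt_irrefl 0 this
end

section
/- Suppose masses m₁ = m₂ = 1 and m₃ = m₄ = m > 0 are at q₁ = (−1,0), q₂ = (1,0), q₃ = (0,√(a²−1)), q₄ = (0,√(b²−1)) with 1 < a < b, and they form a central configuration. Then b = 2 implies a = 2/√3 and m = 1. -/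
set_option maxHeartbeats 2000000 in
theorem stmt9 (m lam a b : ℝ) (hm : 0 < m) (hlam : 0 < lam)
    (ha : 1 < a) (hab : a < b)
    (q : Fin 4 → EuclideanSpace ℝ (Fin 2)) (mass : Fin 4 → ℝ)
    (hq1 : q 0 = WithLp.toLp 2 ![-1, 0]) (hq2 : q 1 = WithLp.toLp 2 ![1, 0])
    (hq3 : q 2 = WithLp.toLp 2 ![0, Real.sqrt (a^2 - 1)]) (hq4 : q 3 = WithLp.toLp 2 ![0, Real.sqrt (b^2 - 1)])
    (hm1 : mass 0 = 1) (hm2 : mass 1 = 1) (hm3 : mass 2 = m) (hm4 : mass 3 = m)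
    (c : EuclideanSpace ℝ (Fin 2))
    (hc : c = (∑ i, mass i)⁻¹ • ∑ i, mass i • q i)
    (hcc : ∀ j, (-(lam * mass j)) • (q j - c) =
      ∑ i ∈ Finset.univ.erase j, (mass i * mass j / ‖q i - q j‖^3) • (q i - q j))
    (hb2 : b = 2) :
    a = 2 / Real.sqrt 3 ∧ m = 1 := by
  subst hb2
  set r := Real.sqrt 3 with hrdef
  set s := Real.sqrt (a^2 - 1) with hsdef
  have hr0 : (0:ℝ) < r := Real.sqrt_pos.mpr (by norm_num)
  have hr2 : r^2 = 3 := Real.sq_sqrt (by norm_num)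
  have ha0 : (0:ℝ) < a := by linarith
  have hs2 : s^2 = a^2 - 1 := Real.sq_sqrt (by nlinarith)
  have hs0 : (0:ℝ) < s := Real.sqrt_pos.mpr (by nlinarith)
  have hsr : s < r := by nlinarith [hs2, hr2]
  have hq4' : q 3 = WithLp.toLp 2 ![0, r] := by rw [hq4]; norm_num; exact hrdef.symm
  have sq2 : Real.sqrt 4 = 2 := by
    rw [show (4:ℝ) = 2^2 by norm_num, Real.sqrt_sq (by norm_num : (0:ℝ) ≤ 2)]
  -- norms
  have n10 : ‖q 1 - q 0‖ = 2 := by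
    rw [hq1, hq2, EuclideanSpace.norm_eq]; simp [Fin.sum_univ_two]; norm_num
  have n20 : ‖q 2 - q 0‖ = a := by
    rw [hq1, hq3, EuclideanSpace.norm_eq]; simp [Fin.sum_univ_two]
    rw [show (1:ℝ)+s^2 = a^2 by rw [hs2]; ring, Real.sqrt_sq ha0.le]
  have n30 : ‖q 3 - q 0‖ = 2 := by
    rw [hq1, hq4', EuclideanSpace.norm_eq]; simp [Fin.sum_univ_two]
    rw [show (1:ℝ)+r^2 = 4 by rw [hr2]; norm_num]; exact sq2
  have n02 : ‖q 0 - q 2‖ = a := by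
    rw [hq1, hq3, EuclideanSpace.norm_eq]; simp [Fin.sum_univ_two]
    rw [show (1:ℝ)+s^2 = a^2 by rw [hs2]; ring, Real.sqrt_sq ha0.le]
  have n12 : ‖q 1 - q 2‖ = a := by
    rw [hq2, hq3, EuclideanSpace.norm_eq]; simp [Fin.sum_univ_two]
    rw [show (1:ℝ)+s^2 = a^2 by rw [hs2]; ring, Real.sqrt_sq ha0.le]
  have n32 : ‖q 3 - q 2‖ = r - s := by
    rw [hq3, hq4', EuclideanSpace.norm_eq]; simp [Fin.sum_univ_two]
    rw [Real.sqrt_sq (by linarith)]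
  have n23 : ‖q 2 - q 3‖ = r - s := by
    rw [hq3, hq4', EuclideanSpace.norm_eq]; simp [Fin.sum_univ_two]
    rw [show (s-r)^2 = (r-s)^2 by ring, Real.sqrt_sq (by linarith)]
  have n03 : ‖q 0 - q 3‖ = 2 := by
    rw [hq1, hq4', EuclideanSpace.norm_eq]; simp [Fin.sum_univ_two]
    rw [show (1:ℝ)+r^2 = 4 by rw [hr2]; norm_num]; exact sq2
  have n13 : ‖q 1 - q 3‖ = 2 := by
    rw [hq2, hq4', EuclideanSpace.norm_eq]; simp [Fin.sum_univ_two]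
    rw [show (1:ℝ)+r^2 = 4 by rw [hr2]; norm_num]; exact sq2
  -- center of mass components
  have hC0 := congrArg (EuclideanSpace.proj (0 : Fin 2)) hc
  have hC1 := congrArg (EuclideanSpace.proj (1 : Fin 2)) hc
  simp only [map_smul, map_sum, PiLp.proj_apply, Fin.sum_univ_four, hm1, hm2, hm3, hm4,
    hq1, hq2, hq3, hq4', smul_eq_mul, Matrix.cons_val_zero, Matrix.cons_val_one,
    Matrix.head_cons] at hC0 hC1
  -- equations
  have H0x := congrArg (EuclideanSpace.proj (0 : Fin 2)) (hcc 0)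
  have H0y := congrArg (EuclideanSpace.proj (1 : Fin 2)) (hcc 0)
  have H2y := congrArg (EuclideanSpace.proj (1 : Fin 2)) (hcc 2)
  have H3y := congrArg (EuclideanSpace.proj (1 : Fin 2)) (hcc 3)
  rw [show ((Finset.univ).erase (0 : Fin 4)) = {1, 2, 3} by decide] at H0x H0y
  rw [show ((Finset.univ).erase (2 : Fin 4)) = {0, 1, 3} by decide] at H2y
  rw [show ((Finset.univ).erase (3 : Fin 4)) = {0, 1, 2} by decide] at H3y
  rw [Finset.sum_insert (by decide), Finset.sum_insert (by decide), Finset.sum_singleton] at H0x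
  rw [Finset.sum_insert (by decide), Finset.sum_insert (by decide), Finset.sum_singleton] at H0y
  rw [Finset.sum_insert (by decide), Finset.sum_insert (by decide), Finset.sum_singleton] at H2y
  rw [Finset.sum_insert (by decide), Finset.sum_insert (by decide), Finset.sum_singleton] at H3y
  simp only [map_smul, map_sum, map_sub, PiLp.proj_apply,
    hm1, hm2, hm3, hm4, n10, n20, n30, n02, n12, n32, n23, n03, n13,
    smul_eq_mul] at H0x H0y H2y H3y
  simp only [hq1, hq2, hq3, hq4', Matrix.cons_val_zero, Matrix.cons_val_one,
    Matrix.head_cons] at H0x H0y H2y H3y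
  norm_num at H0x H0y H2y H3y hC0 hC1
  rw [hC0] at H0x
  have ha3 : (0:ℝ) < a^3 := by positivity
  have hrs : (0:ℝ) < r - s := by linarith
  field_simp at H0x H0y H2y H3y hC1
  -- clean equations
  have E1 : 8*a^3*lam = 2*a^3 + 8*m + m*a^3 := by linear_combination H0x/4
  have E2 : 8*a^3*lam*(c 1) = 8*m*s + m*r*a^3 := by linear_combination H0y
  have E3 : lam*(s - c 1)*(a^3*(r-s)^2) = 2*s*(r-s)^2 - m*a^3 := by
    refine mul_left_cancel₀ (show m*a^3*(r-s) ≠ 0 by positivity) ?_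
    linear_combination (-(m*a^3*(r-s)))*H2y
  have E4 : lam*(r - c 1)*(4*(r-s)^2) = r*(r-s)^2 + 4*m := by
    refine mul_left_cancel₀ (show 16*m*(r-s) ≠ 0 by positivity) ?_
    linear_combination (-8*m)*H3y
  clear H0x H0y H2y H3y hcc hc hq1 hq2 hq3 hq4 hq4' n10 n20 n30 n02 n12 n32 n23 n03 n13 hC0
  have ha8 : a^3 < 8 := by nlinarith
  -- first reduction: (a^3-8) * ((m+2)s - rm) = 0
  have key1 : m*((a^3-8)*((m+2)*s - r*m)) = 0 := by
    linear_combination 2*(1+m)*E2 - 8*a^3*lam*hC1 - m*(s+r)*E1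
  have hG1 : (m+2)*s = r*m := by
    have h1 : (a^3-8)*((m+2)*s - r*m) = 0 := by
      rcases mul_eq_zero.mp key1 with h | h
      · exfalso; linarith
      · exact h
    rcases mul_eq_zero.mp h1 with h | h
    · exfalso; linarith
    · linarith
  -- second reduction
  have key2 : (2*a^3+8*m+m*a^3)*(r-s)^3 + 16*s*(r-s)^2 = 2*r*a^3*(r-s)^2 + 16*m*a^3 := by
    linear_combination (-(r-s)^3)*E1 + 2*a^3*E4 - 8*E3
  have hu : (r-s)*(m+2) = 2*r := by linear_combination -hG1
  have hu2 : (r-s)^2*(m+2)^2 = 12 := by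
    linear_combination ((r-s)*(m+2)+2*r)*hu + 4*hr2
  have hu3 : (r-s)^3*(m+2)^3 = 24*r := by
    linear_combination ((r-s)^2*(m+2)^2+2*r*(r-s)*(m+2)+4*r^2)*hu + 8*r*hr2
  have hk : 16*m*(a^3*(m+2)^3 - 24*r) = 0 := by
    linear_combination -(m+2)^3*key2 + (2*a^3+8*m+m*a^3)*hu3 + (16*s-2*r*a^3)*(m+2)*hu2 +
      192*hG1
  have key3 : a^3*(m+2)^3 = 24*r := by
    have h := (mul_eq_zero.mp hk).resolve_left (by positivity)
    linarith
  have ha2' : a^2*(m+2)^2 = 4*(m^2+m+1) := by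
    linear_combination (s*(m+2)+r*m)*hG1 + m^2*hr2 - (m+2)^2*hs2
  have h6 : (a^2*(m+2)^2)^3 = 1728 := by
    linear_combination (a^3*(m+2)^3+24*r)*key3 + 576*hr2
  have hx3 : (m^2+m+1)^3 = 27 := by
    linear_combination (1/64)*h6 - (((a^2*(m+2)^2)^2 + 4*(m^2+m+1)*(a^2*(m+2)^2) +
      16*(m^2+m+1)^2)/64)*ha2'
  have hx : m^2+m+1 = 3 := by
    have hfac : (m^2+m+1-3)*((m^2+m+1)^2+3*(m^2+m+1)+9) = 0 := by linear_combination hx3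
    have h := (mul_eq_zero.mp hfac).resolve_right (by positivity)
    linarith
  have hmeq : m = 1 := by
    have hfac : (m-1)*(m+2) = 0 := by linear_combination hx
    have h := (mul_eq_zero.mp hfac).resolve_right (by positivity)
    linarith
  subst hmeq
  have haq : a^2 = 4/3 := by
    linear_combination -hs2 + (1/9)*(3*s+r)*hG1 + (1/9)*hr2
  refine ⟨?_, rfl⟩
  rw [eq_div_iff hr0.ne']
  have hfac : (a*r-2)*(a*r+2) = 0 := by linear_combination r^2*haq + (4/3)*hr2
  have h := (mul_eq_zero.mp hfac).resolve_right (by positivity)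
  linarith
end

section
/- With g₁, g₂ as in the reduced kite central configuration equations and m = 0 admissible, if g₁ = g₂ = 0, m = 0, 1 ≤ a, and 1 < b, then b = 2 and a ∈ {1, 2}. -/
theorem stmt10 (m a b : ℝ) (hm : m = 0) (ha : 1 ≤ a) (hb : 1 < b) (hab : a ≠ b)
    (hg1 : m * (1 / (Real.sqrt (a^2 - 1) - Real.sqrt (b^2 - 1))^2
        + (Real.sqrt (a^2 - 1) - Real.sqrt (b^2 - 1)) / b^3)
      - Real.sqrt (a^2 - 1) * (8 - a^3) / (4 * a^3) = 0)
    (hg2 : m * (1 / (Real.sqrt (a^2 - 1) - Real.sqrt (b^2 - 1))^2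
        + (Real.sqrt (a^2 - 1) - Real.sqrt (b^2 - 1)) / a^3)
      + Real.sqrt (b^2 - 1) * (8 - b^3) / (4 * b^3) = 0) :
    b = 2 ∧ (a = 1 ∨ a = 2) := by
  subst hm
  simp only [zero_mul, zero_sub, zero_add, neg_eq_zero] at hg1 hg2
  have hb3 : (0:ℝ) < b^3 := by positivity
  have ha3 : (0:ℝ) < a^3 := by positivity
  have hsb : Real.sqrt (b^2 - 1) > 0 := Real.sqrt_pos.mpr (by nlinarith)
  have hb2 : b = 2 := by
    rcases mul_eq_zero.mp ((div_eq_zero_iff.mp hg2).resolve_right (show (4:ℝ)*b^3 ≠ 0 by positivity)) with h | h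
    · exact absurd h hsb.ne'
    · nlinarith [sq_nonneg (b - 2), sq_nonneg (b + 2)]
  refine ⟨hb2, ?_⟩
  rcases div_eq_zero_iff.mp hg1 with h | h
  · rcases mul_eq_zero.mp h with h | h
    · left
      have : a^2 - 1 ≤ 0 := by
        by_contra hc
        exact (Real.sqrt_pos.mpr (lt_of_not_ge hc)).ne' h
      nlinarith
    · right; nlinarith [sq_nonneg (a - 2), sq_nonneg (a + 2)]
  · linarith
end

section
/- Define g(a,b) = x·x₁ + y·y₁ where x = √(a²−1)(a³−8)/a⁶, x₁ = (√(a²−1)−√(b²−1))³ + a³, y = √(b²−1)(b³−8)/b⁶, y₁ = (√(a²−1)−√(b²−1))³ + b³. Then for every a with 1 < a < 2, g(a, √2) < 0. -/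
theorem stmt11 (a : ℝ) (ha : a ∈ Set.Ioo (1 : ℝ) 2) :
    Real.sqrt (a^2 - 1) * (a^3 - 8) / a^6 *
        ((Real.sqrt (a^2 - 1) - Real.sqrt ((Real.sqrt 2)^2 - 1))^3 + a^3)
      + Real.sqrt ((Real.sqrt 2)^2 - 1) * ((Real.sqrt 2)^3 - 8) / (Real.sqrt 2)^6 *
        ((Real.sqrt (a^2 - 1) - Real.sqrt ((Real.sqrt 2)^2 - 1))^3 + (Real.sqrt 2)^3)
      < 0 := by
  obtain ⟨ha1, ha2⟩ := ha
  have hs2 : (Real.sqrt 2)^2 = 2 := Real.sq_sqrt (by norm_num)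
  have hone : Real.sqrt ((Real.sqrt 2)^2 - 1) = 1 := by
    rw [hs2]; norm_num
  rw [hone]
  set t := Real.sqrt (a^2 - 1) with ht
  set s := Real.sqrt 2 with hsdef
  have hs0 : 0 < s := Real.sqrt_pos.mpr (by norm_num)
  have hs15 : s < 3/2 := by
    rw [hsdef]
    rw [show (3:ℝ)/2 = Real.sqrt ((3/2)^2) by rw [Real.sqrt_sq]; norm_num]
    apply Real.sqrt_lt_sqrt <;> norm_num
  have ht0 : 0 < t := Real.sqrt_pos.mpr (by nlinarith)
  have ht2 : t < 2 := by
    rw [ht]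
    rw [show (2:ℝ) = Real.sqrt 4 by rw [show (4:ℝ) = 2^2 by norm_num, Real.sqrt_sq]; norm_num]
    apply Real.sqrt_lt_sqrt <;> nlinarith
  have hcube : (t - 1)^3 > -1 := by nlinarith [sq_nonneg (t - 3/2), ht0.le]
  have ha3 : 1 < a^3 := by nlinarith
  have hA : t * (a^3 - 8) / a^6 * ((t - 1)^3 + a^3) < 0 := by
    apply mul_neg_of_neg_of_pos
    · apply div_neg_of_neg_of_pos
      · apply mul_neg_of_pos_of_neg ht0; nlinarith
      · positivity
    · linarith
  have hs3 : s^3 = 2*s := by nlinarith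
  have hs6 : s^6 = 8 := by nlinarith
  have hB : 1 * (s^3 - 8) / s^6 * ((t - 1)^3 + s^3) < 0 := by
    apply mul_neg_of_neg_of_pos
    · apply div_neg_of_neg_of_pos
      · nlinarith
      · positivity
    · nlinarith
  linarith
end

section
/- With g as above, g(3/2, 5/2) = (−15609375√5 + 5558625√21 + 23836392√105 − 230181064)/22781250, and this value is strictly positive. -/
theorem stmt12 :
    Real.sqrt ((3/2 : ℝ)^2 - 1) * ((3/2 : ℝ)^3 - 8) / (3/2 : ℝ)^6 *
        ((Real.sqrt ((3/2 : ℝ)^2 - 1) - Real.sqrt ((5/2 : ℝ)^2 - 1))^3 + (3/2 : ℝ)^3)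
      + Real.sqrt ((5/2 : ℝ)^2 - 1) * ((5/2 : ℝ)^3 - 8) / (5/2 : ℝ)^6 *
        ((Real.sqrt ((3/2 : ℝ)^2 - 1) - Real.sqrt ((5/2 : ℝ)^2 - 1))^3 + (5/2 : ℝ)^3)
      = (-15609375 * Real.sqrt 5 + 5558625 * Real.sqrt 21 + 23836392 * Real.sqrt 105
          - 230181064) / 22781250 ∧
    0 < (-15609375 * Real.sqrt 5 + 5558625 * Real.sqrt 21 + 23836392 * Real.sqrt 105
          - 230181064) / 22781250 := by
  have h4 : Real.sqrt 4 = 2 := by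
    rw [show (4:ℝ) = 2^2 by norm_num, Real.sqrt_sq (by norm_num : (0:ℝ) ≤ 2)]
  have h1 : Real.sqrt ((3/2 : ℝ)^2 - 1) = Real.sqrt 5 / 2 := by
    rw [show ((3/2 : ℝ)^2 - 1) = 5/4 by norm_num,
      Real.sqrt_div (by norm_num : (0:ℝ) ≤ 5) 4, h4]
  have h2 : Real.sqrt ((5/2 : ℝ)^2 - 1) = Real.sqrt 21 / 2 := by
    rw [show ((5/2 : ℝ)^2 - 1) = 21/4 by norm_num,
      Real.sqrt_div (by norm_num : (0:ℝ) ≤ 21) 4, h4]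
  have h105 : Real.sqrt 105 = Real.sqrt 5 * Real.sqrt 21 := by
    rw [← Real.sqrt_mul (by norm_num : (0:ℝ) ≤ 5) 21]; norm_num
  have hu : Real.sqrt 5 ^ 2 = 5 := Real.sq_sqrt (by norm_num)
  have hv : Real.sqrt 21 ^ 2 = 21 := Real.sq_sqrt (by norm_num)
  set u := Real.sqrt 5 with hud
  set v := Real.sqrt 21 with hvd
  constructor
  · rw [h1, h2, h105]
    linear_combination ((-37/1458)*u^2 + (296474/3796875)*u*v + (-311297/3796875)*v^2
        + (-185/1458)) * hu
      + ((355766/11390625)*u*v + (-61/31250)*v^2 + (-3424253/7593750)) * hv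
  · rw [h105]
    have hun : 0 ≤ u := Real.sqrt_nonneg 5
    have hvn : 0 ≤ v := Real.sqrt_nonneg 21
    have hub : u < 2.2360680 := by nlinarith
    have hvb : (4.5825756 : ℝ) < v := by nlinarith
    have hwb : (10.2469507 : ℝ) < u * v := by nlinarith
    have : (0:ℝ) < -15609375 * u + 5558625 * v + 23836392 * (u * v) - 230181064 := by
      nlinarith
    positivity
end

section
/- Define g(a,b) = x·x₁ + y·y₁ as above. For every a ∈ (1,2) and b ∈ (√2, 5/2), the partial derivative ∂g/∂b is strictly positive. -/
set_option maxHeartbeats 1000000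

lemma poly13 (b : ℝ) (h1 : 2 < b^2) (h2 : b ≤ 2) (hb1 : 1 < b) :
    0 < (-2*b^5+3*b^3+40*b^2-48)*(b^3-(b^2/2)*(b^2-1))+3*(b^2-1)*b^3*(b^3-8) := by
  set e : ℝ := b^2 - 2 with he
  have he0 : 0 ≤ e := by simp [he]; linarith
  have he2 : e ≤ 2 := by nlinarith
  have hL2 : (707/500 + 29/100*e)^2 < b^2 := by nlinarith [mul_nonneg he0 (by linarith : (0:ℝ) ≤ 2 - e)]
  have hL : 707/500 + 29/100*e ≤ b := by nlinarith [hL2]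
  have hm : 0 < e^3 + 7/2*e^2 + 39/2*e + 9 := by positivity
  have hbm : (707/500 + 29/100*e) * (e^3 + 7/2*e^2 + 39/2*e + 9) ≤ b * (e^3 + 7/2*e^2 + 39/2*e + 9) :=
    mul_le_mul_of_nonneg_right hL hm.le
  have hp : 0 < (707/500 + 29/100*e) * (e^3 + 7/2*e^2 + 39/2*e + 9) + (e^3 - 14*e^2 - 24*e - 8) := by
    nlinarith [mul_nonneg he0 (by linarith : (0:ℝ) ≤ 2 - e), pow_nonneg he0 3, pow_nonneg he0 4]
  have key : 0 < b * (e^3 + 7/2*e^2 + 39/2*e + 9) + (e^3 - 14*e^2 - 24*e - 8) := by linarith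
  have hb2 : 0 < b^2 := by positivity
  nlinarith [mul_pos hb2 key]

lemma key13 (b s u : ℝ) (hs : s^2 = b^2 - 1) (hb2 : b < 5/2) (hb0 : 0 < b)
    (hs1 : 1 < s) (hu0 : 0 < u) (hu3 : u^2 < 3) :
    0 < (-2*b^5+3*b^3+40*b^2-48)*((u-s)^3+b^3) + 3*s*b^2*(b^3-8)*(b*s-(u-s)^2) := by
  have hb2' : 2 < b^2 := by nlinarith
  have hb1 : 1 < b := by nlinarith
  have hbs : s < b := by nlinarith
  have hs0 : (0:ℝ) < s := lt_trans one_pos hs1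
  have hqf : (0:ℝ) ≤ (u-s)^2 - (u-s)*s + s^2 := by nlinarith [sq_nonneg (2*(u-s)-s), sq_nonneg s]
  rcases le_or_gt b 2 with h2 | h2
  · have hA : 0 < -2*b^5+3*b^3+40*b^2-48 := by
      nlinarith [mul_nonneg (show (0:ℝ) ≤ 4-b^2 by nlinarith) (by positivity : (0:ℝ) ≤ b^3),
        mul_nonneg (show (0:ℝ) ≤ 2-b by linarith) (sq_nonneg b)]
    have hsb : s ≤ b^2/2 := by nlinarith [sq_nonneg (s-1)]
    have hf := poly13 b hb2' h2 hb1
    have hmul : (-2*b^5+3*b^3+40*b^2-48)*(s*(b^2-1)) ≤ (-2*b^5+3*b^3+40*b^2-48)*((b^2/2)*(b^2-1)) :=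
      mul_le_mul_of_nonneg_left (mul_le_mul_of_nonneg_right hsb (by nlinarith)) hA.le
    have hs3 : s^3 = s*(b^2-1) := by
      rw [pow_succ, hs]; ring
    have hR : 0 < (-2*b^5+3*b^3+40*b^2-48)*(b^3-s^3)+3*s^2*b^3*(b^3-8) := by
      rw [hs3, hs]; linarith [hf, hmul]
    have h1 : 0 ≤ (-2*b^5+3*b^3+40*b^2-48) * (u * ((u-s)^2 - (u-s)*s + s^2)) :=
      mul_nonneg hA.le (mul_nonneg hu0.le hqf)
    have h2' : 0 ≤ (3*s*b^2) * ((8-b^3) * (u-s)^2) :=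
      mul_nonneg (by positivity) (mul_nonneg (by nlinarith) (sq_nonneg _))
    have hid : (-2*b^5+3*b^3+40*b^2-48)*((u-s)^3+b^3) + 3*s*b^2*(b^3-8)*(b*s-(u-s)^2)
        = ((-2*b^5+3*b^3+40*b^2-48)*(b^3-s^3)+3*s^2*b^3*(b^3-8))
          + (-2*b^5+3*b^3+40*b^2-48) * (u * ((u-s)^2 - (u-s)*s + s^2))
          + (3*s*b^2) * ((8-b^3) * (u-s)^2) := by ring
    linarith [hR, h1, h2']
  · have hA : 0 < -2*b^5+3*b^3+40*b^2-48 := by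
      nlinarith [mul_nonneg (show (0:ℝ) ≤ 25/4-b^2 by nlinarith) (by positivity : (0:ℝ) ≤ b^3),
        mul_nonneg (show (0:ℝ) ≤ 5/2-b by linarith) (sq_nonneg b), sq_nonneg (b-2)]
    have hw3 : 0 < (u-s)^3 + b^3 := by
      have husb : 0 < u - s + b := by linarith
      have hq2 : 0 < (u-s)^2 - (u-s)*b + b^2 := by nlinarith [sq_nonneg (2*(u-s)-b), sq_nonneg b]
      nlinarith [mul_pos husb hq2]
    have hb3 : (0:ℝ) ≤ b^3 - 8 := by
      have h := pow_le_pow_left₀ (by norm_num : (0:ℝ) ≤ 2) h2.le 3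
      norm_num at h; linarith
    have hu2 : u < 2 := by linarith [sq_nonneg (u-2)]
    have h2s : u < 2*s := by linarith
    have hw2 : (0:ℝ) ≤ b*s - (u-s)^2 := by
      have t1 : 0 < s*(b-s) := mul_pos hs0 (sub_pos.2 hbs)
      have t2 : 0 ≤ u*(2*s-u) := mul_nonneg hu0.le (by linarith)
      linarith [t1, t2]
    have := mul_nonneg (mul_nonneg (by positivity : (0:ℝ) ≤ 3*s*b^2) hb3) hw2
    linarith [mul_pos hA hw3, this]

theorem stmt13 (a b : ℝ) (ha : a ∈ Set.Ioo (1 : ℝ) 2)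
    (hb : b ∈ Set.Ioo (Real.sqrt 2) (5/2 : ℝ)) :
    ∃ d : ℝ,
      HasDerivAt (fun t : ℝ =>
        Real.sqrt (a^2 - 1) * (a^3 - 8) / a^6 *
            ((Real.sqrt (a^2 - 1) - Real.sqrt (t^2 - 1))^3 + a^3)
          + Real.sqrt (t^2 - 1) * (t^3 - 8) / t^6 *
            ((Real.sqrt (a^2 - 1) - Real.sqrt (t^2 - 1))^3 + t^3)) d b ∧
      0 < d := by
  obtain ⟨ha1, ha2⟩ := ha
  obtain ⟨hb1, hb2⟩ := hb
  have hb0 : 0 < b := lt_of_le_of_lt (Real.sqrt_nonneg 2) hb1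
  have hb2sq : 2 < b^2 := by
    have h := Real.sq_sqrt (by norm_num : (0:ℝ) ≤ 2)
    nlinarith [Real.sqrt_nonneg 2]
  have hbb1 : 1 < b := by nlinarith
  set u : ℝ := Real.sqrt (a^2 - 1) with hudef
  set s : ℝ := Real.sqrt (b^2 - 1) with hsdef
  have ha0 : (0:ℝ) < a^2 - 1 := by nlinarith
  have hu2 : u^2 = a^2 - 1 := Real.sq_sqrt ha0.le
  have hu0 : 0 < u := Real.sqrt_pos.2 ha0
  have hu3 : u^2 < 3 := by rw [hu2]; nlinarith
  have hbsq0 : (0:ℝ) < b^2 - 1 := by nlinarith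
  have hss : s^2 = b^2 - 1 := Real.sq_sqrt hbsq0.le
  have hs1 : 1 < s := by nlinarith [Real.sqrt_nonneg (b^2 - 1), hss]
  have hs0 : (0:ℝ) < s := lt_trans one_pos hs1
  have hbne : b ≠ 0 := hb0.ne'
  have hsne : s ≠ 0 := hs0.ne'
  have hane : a ≠ 0 := by positivity
  -- derivative of sqrt(t^2-1)
  have h0 : HasDerivAt (fun t : ℝ => t^2 - 1) (2*b) b := by
    simpa using (hasDerivAt_pow 2 b).sub_const 1
  have hsqrt : HasDerivAt (fun t : ℝ => Real.sqrt (t^2 - 1)) (b/s) b := by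
    have h := h0.sqrt (ne_of_gt hbsq0)
    convert h using 1
    rw [hsdef]
    field_simp
  have Hg1 : HasDerivAt (fun t : ℝ => (u - Real.sqrt (t^2 - 1))^3 + a^3)
      (-(3*(u-s)^2*(b/s))) b := by
    have h := (((hasDerivAt_const b u).sub hsqrt).pow 3).add_const (a^3)
    refine h.congr_deriv ?_
    simp only [Pi.sub_apply]
    push_cast
    ring
  have Hnum : HasDerivAt (fun t : ℝ => Real.sqrt (t^2 - 1) * (t^3 - 8))
      (b/s*(b^3-8) + s*(3*b^2)) b := by
    have h := hsqrt.mul ((hasDerivAt_pow 3 b).sub_const 8)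
    refine h.congr_deriv ?_
    rw [← hsdef]
    push_cast
    ring
  have Hden : HasDerivAt (fun t : ℝ => t^6) (6*b^5) b := by
    simpa using hasDerivAt_pow 6 b
  have Hg2 : HasDerivAt (fun t : ℝ => Real.sqrt (t^2 - 1) * (t^3 - 8) / t^6)
      ((b^5 - 8*b^2 - 3*s^2*b^3 + 48*s^2)/(s*b^7)) b := by
    have h := Hnum.div Hden (by positivity : b^6 ≠ 0)
    rw [← hsdef] at h
    refine h.congr_deriv ?_
    field_simp
    ring
  have Hg3 : HasDerivAt (fun t : ℝ => (u - Real.sqrt (t^2 - 1))^3 + t^3)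
      (3*b^2 - 3*(u-s)^2*(b/s)) b := by
    have h := (((hasDerivAt_const b u).sub hsqrt).pow 3).add (hasDerivAt_pow 3 b)
    refine h.congr_deriv ?_
    simp only [Pi.sub_apply]
    push_cast
    ring
  have HF := (Hg1.const_mul (u * (a^3 - 8) / a^6)).add (Hg2.mul Hg3)
  refine ⟨_, HF, ?_⟩
  rw [← hsdef]
  -- positivity of the derivative value
  have key := key13 b s u hss hb2 hb0 hs1 hu0 hu3
  have hT1 : 0 ≤ u * (a^3 - 8) / a^6 * (-(3*(u-s)^2*(b/s))) := by
    have ha3 : a^3 ≤ 8 := by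
      have h := pow_le_pow_left₀ (by linarith : (0:ℝ) ≤ a) ha2.le 3
      norm_num at h; linarith
    have e : u * (a^3 - 8) / a^6 * (-(3*(u-s)^2*(b/s))) =
        (u * (8 - a^3)) * (3*(u-s)^2*(b/s)) / a^6 := by ring
    rw [e]
    apply div_nonneg _ (by positivity)
    apply mul_nonneg (mul_nonneg hu0.le (by linarith)) (by positivity)
  have hPid : ((b^5 - 8*b^2 - 3*s^2*b^3 + 48*s^2)/(s*b^7) * ((u-s)^3 + b^3)
        + s*(b^3-8)/b^6 * (3*b^2 - 3*(u-s)^2*(b/s))) * (s*b^7)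
      = (-2*b^5+3*b^3+40*b^2-48)*((u-s)^3+b^3) + 3*s*b^2*(b^3-8)*(b*s-(u-s)^2) := by
    have e1 : (b^5 - 8*b^2 - 3*s^2*b^3 + 48*s^2 : ℝ) = (-2*b^5+3*b^3+40*b^2-48) + 3*(s^2-(b^2-1))*(16-b^3) := by ring
    rw [e1, hss]
    field_simp
    ring
  have hQ : 0 < ((b^5 - 8*b^2 - 3*s^2*b^3 + 48*s^2)/(s*b^7) * ((u-s)^3 + b^3)
        + s*(b^3-8)/b^6 * (3*b^2 - 3*(u-s)^2*(b/s))) * (s*b^7) := by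
    rw [hPid]; exact key
  have hsb7 : 0 < s * b^7 := by positivity
  have hP : 0 < (b^5 - 8*b^2 - 3*s^2*b^3 + 48*s^2)/(s*b^7) * ((u-s)^3 + b^3)
        + s*(b^3-8)/b^6 * (3*b^2 - 3*(u-s)^2*(b/s)) := by
    rcases mul_pos_iff.mp hQ with ⟨h, _⟩ | ⟨_, h⟩
    · exact h
    · linarith
  linarith [hT1, hP]
end
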